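/- Let p ≥ 2. For any index i with 1 ≤ i ≤ p and any U ∈ SL(p,ℤ), U can be written as U = K·J, where K belongs to the subgroup of SL(p,ℤ) generated by the matrices R_{1j}² and Q_{1j} for 1 < j ≤ p, and J ∈ SL(p,ℤ) satisfies that the (i,i) entry of J^{-1} equals 1 (equivalently, since det J = 1, the (i,i) cofactor J*_{ii} of J equals 1). -/

import Mathlib

/-!
Write `H` for the subgroup generated by the `R_{1j}²` and `Q_{1j}`. It contains the transvections
`R_{1j}^{2s}`, their conjugates `R_{j1}^{2s} = Q_{1j} R_{1j}^{-2s} Q_{1j}⁻¹`, and the `Q_{1j}`, which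
act on `ℤ^p` by `(x₁, x_j) ↦ (-x_j, x₁)`. These moves run a Euclidean algorithm with even
quotients, taking a vector with odd first entry and even other entries to a multiple of `e₁`.
For a unimodular vector the multiple is `±e₁`, and `Q_{1j}² = -1` on `span(e₁, e_j)` fixes the
sign.

With `J = K⁻¹U` we have `(J⁻¹)ᵢᵢ = v ⬝ K eᵢ`, where `v` is row `i` of `U⁻¹`. Let `c` be column `i`
of `U`, so that `v ⬝ c = 1`. Some `v_k` is odd, and then `w = v_k e_k + (1 - v_k²) c` satisfies
`v ⬝ w = 1` and `w ≡ e_k (mod 2)`. Hence `w` lies in the `H`-orbit of `e₁`, which is also the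
orbit of `eᵢ = Q_{1i} e₁`.
-/

open Matrix

/-- `Rm p i j h` is the matrix `R_{ij} = I + E_{ij}` (where `E_{ij}` has a single nonzero
entry `1` at position `(i,j)`), as an element of `SL(p, ℤ)`. -/
def Rm (p : ℕ) (i j : Fin p) (h : i ≠ j) : Matrix.SpecialLinearGroup (Fin p) ℤ :=
  ⟨1 + Matrix.single i j 1, by
    simpa [Matrix.transvection] using Matrix.det_transvection_of_ne i j h (1 : ℤ)⟩

def Qm (p : ℕ) (i j : Fin p) (h : i ≠ j) : Matrix.SpecialLinearGroup (Fin p) ℤ :=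
  (Rm p i j h)⁻¹ * Rm p j i h.symm * (Rm p i j h)⁻¹

/-- The first index `1` (of the paper's indexing `1, …, p`) in `Fin p`. -/
def firstIdx (p : ℕ) (hp : 2 ≤ p) : Fin p := ⟨0, by omega⟩

open MulAction Function

lemma Int.exists_natAbs_add_two_mul_mul_le (a : ℤ) {b : ℤ} (hb : b ≠ 0) :
    ∃ s, (a + 2 * s * b).natAbs ≤ b.natAbs := by
  have hm : 0 < 2 * b.natAbs := by omega
  set q := a.bdiv (2 * b.natAbs)
  refine ⟨-q * b.sign, ?_⟩
  have hlow := Int.le_bmod (x := a) hm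
  have hupp := Int.bmod_lt (x := a) hm
  have hdiv := Int.bmod_add_bdiv a (2 * b.natAbs)
  have hrepr : a + 2 * (-q * b.sign) * b = a.bmod (2 * b.natAbs) := by
    rw [Nat.cast_mul, Nat.cast_ofNat] at hdiv
    linear_combination -hdiv - 2 * q * Int.sign_mul_self b
  rw [hrepr]
  omega

lemma sum_natAbs_update_lt {ι : Type*} [Fintype ι] [DecidableEq ι] {x : ι → ℤ} {i : ι} {a : ℤ}
    (h : a.natAbs < (x i).natAbs) : ∑ k, (update x i a k).natAbs < ∑ k, (x k).natAbs := by
  refine Finset.sum_lt_sum (fun k _ => ?_) ⟨i, Finset.mem_univ i, by simpa using h⟩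
  rcases eq_or_ne k i with rfl | hk
  · simpa using h.le
  · simp [hk]

lemma exists_odd_of_dotProduct_eq_one {ι : Type*} [Fintype ι] {v c : ι → ℤ} (h : v ⬝ᵥ c = 1) :
    ∃ k, Odd (v k) := by
  by_contra! hv
  have : (2 : ℤ) ∣ v ⬝ᵥ c :=
    Finset.dvd_sum fun k _ => (Int.not_odd_iff_even.mp (hv k)).two_dvd.mul_right (c k)
  omega

lemma Subgroup.orbit_smul_of_mem {G α : Type*} [Group G] [MulAction G α] {H : Subgroup G}
    {g : G} (hg : g ∈ H) (a : α) : orbit H (g • a) = orbit H a :=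
  orbit_smul (⟨g, hg⟩ : H) a

namespace Matrix.SpecialLinearGroup

variable {ι R : Type*} [Fintype ι] [DecidableEq ι] [CommRing R]

theorem transvection_smul {i j : ι} (hij : i ≠ j) (b : R) (x : ι → R) :
    transvection hij b • x = update x i (x i + b * x j) := by
  rw [Matrix.SpecialLinearGroup.smul_def, transvection_coe, add_smul, one_smul]
  ext k
  rcases eq_or_ne k i with rfl | hk
  · simp [single_mulVec]
  · simp [single_mulVec, hk]

theorem transvection_zpow {i j : ι} (hij : i ≠ j) (b : R) (n : ℤ) :
    transvection hij b ^ n = transvection hij (n * b) := by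
  induction n using Int.induction_on with
  | zero => simp
  | succ k ih =>
    rw [_root_.zpow_add_one, ih, ← transvection_add]
    push_cast
    ring_nf
  | pred k ih =>
    rw [_root_.zpow_sub_one, ih, transvection_inv, ← transvection_add]
    push_cast
    ring_nf

end Matrix.SpecialLinearGroup

open Matrix.SpecialLinearGroup

variable {p : ℕ}

lemma Rm_eq_transvection (i j : Fin p) (h : i ≠ j) : Rm p i j h = transvection h 1 := rfl

lemma Qm_smul (i j : Fin p) (h : i ≠ j) (x : Fin p → ℤ) :
    Qm p i j h • x = update (update x i (-x j)) j (x i) := by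
  rw [Qm, Rm_eq_transvection, Rm_eq_transvection, transvection_inv, mul_smul, mul_smul,
    transvection_smul, transvection_smul, transvection_smul]
  ext k
  rcases eq_or_ne k i with rfl | hki
  · simp [h, h.symm]
  rcases eq_or_ne k j with rfl | hkj
  · simp [h, h.symm]
  · simp [hki, hkj]

lemma Qm_smul_single (i j : Fin p) (h : i ≠ j) :
    Qm p i j h • (Pi.single i 1 : Fin p → ℤ) = Pi.single j 1 := by
  rw [Qm_smul]
  ext k
  rcases eq_or_ne k j with rfl | hkj
  · simp
  · simp [hkj, h.symm, Pi.single_apply, update_apply]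

def pivotSubgroup (o : Fin p) : Subgroup (Matrix.SpecialLinearGroup (Fin p) ℤ) :=
  Subgroup.closure {A | ∃ (j : Fin p) (h : o ≠ j), A = Rm p o j h ^ 2 ∨ A = Qm p o j h}

section pivotSubgroup

variable {o j : Fin p}

lemma Qm_mem_pivotSubgroup (h : o ≠ j) : Qm p o j h ∈ pivotSubgroup o :=
  Subgroup.subset_closure ⟨j, h, Or.inr rfl⟩

lemma transvection_two_mul_mem_pivotSubgroup (h : o ≠ j) (s : ℤ) :
    transvection h (2 * s) ∈ pivotSubgroup o := by
  have hR : Rm p o j h ^ 2 ∈ pivotSubgroup o := Subgroup.subset_closure ⟨j, h, Or.inl rfl⟩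
  convert zpow_mem hR s using 1
  rw [Rm_eq_transvection, ← zpow_natCast, ← _root_.zpow_mul, transvection_zpow]
  simp

lemma orbit_update_pivot (h : o ≠ j) (s : ℤ) (x : Fin p → ℤ) :
    orbit (pivotSubgroup o) (update x o (x o + 2 * s * x j)) = orbit (pivotSubgroup o) x := by
  rw [← transvection_smul h]
  exact Subgroup.orbit_smul_of_mem (transvection_two_mul_mem_pivotSubgroup h s) x

lemma orbit_update_off_pivot (h : o ≠ j) (s : ℤ) (x : Fin p → ℤ) :
    orbit (pivotSubgroup o) (update x j (x j + 2 * s * x o)) = orbit (pivotSubgroup o) x := by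
  obtain ⟨y, rfl⟩ : ∃ y, x = Qm p o j h • y := ⟨(Qm p o j h)⁻¹ • x, (smul_inv_smul _ x).symm⟩
  have hconj : update (Qm p o j h • y) j ((Qm p o j h • y) j + 2 * s * (Qm p o j h • y) o) =
      Qm p o j h • transvection h (2 * -s) • y := by
    rw [Qm_smul, Qm_smul, transvection_smul]
    ext k
    rcases eq_or_ne k j with rfl | hkj
    · simp [h]
    rcases eq_or_ne k o with rfl | hko
    · simp [h, h.symm]
    · simp [hkj, hko]
  rw [hconj, Subgroup.orbit_smul_of_mem (Qm_mem_pivotSubgroup h),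
    Subgroup.orbit_smul_of_mem (transvection_two_mul_mem_pivotSubgroup h _),
    Subgroup.orbit_smul_of_mem (Qm_mem_pivotSubgroup h)]

lemma orbit_single_eq_orbit_single (o i : Fin p) :
    orbit (pivotSubgroup o) (Pi.single i 1 : Fin p → ℤ) =
      orbit (pivotSubgroup o) (Pi.single o 1 : Fin p → ℤ) := by
  rcases eq_or_ne o i with rfl | h
  · rfl
  · rw [← Qm_smul_single o i h, Subgroup.orbit_smul_of_mem (Qm_mem_pivotSubgroup h)]

lemma orbit_single_neg_one [Nontrivial (Fin p)] (o : Fin p) :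
    orbit (pivotSubgroup o) (Pi.single o (-1) : Fin p → ℤ) =
      orbit (pivotSubgroup o) (Pi.single o 1 : Fin p → ℤ) := by
  obtain ⟨j, hj⟩ := exists_ne o
  have hQ2 : Qm p o j hj.symm • Qm p o j hj.symm • (Pi.single o 1 : Fin p → ℤ) =
      Pi.single o (-1) := by
    rw [Qm_smul_single, Qm_smul]
    ext k
    rcases eq_or_ne k o with rfl | hko
    · simp [hj.symm]
    · simp [hko, hj.symm, Pi.single_apply, update_apply]
  rw [← hQ2, Subgroup.orbit_smul_of_mem (Qm_mem_pivotSubgroup _),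
    Subgroup.orbit_smul_of_mem (Qm_mem_pivotSubgroup _)]

lemma exists_orbit_eq_sum_natAbs_lt (h : o ≠ j) {x : Fin p → ℤ}
    (hodd : Odd (x o)) (heven : ∀ k ≠ o, Even (x k)) (hxj : x j ≠ 0) :
    ∃ y, orbit (pivotSubgroup o) y = orbit (pivotSubgroup o) x ∧ Odd (y o) ∧
      (∀ k ≠ o, Even (y k)) ∧ ∑ k, (y k).natAbs < ∑ k, (x k).natAbs := by
  have hxo : x o ≠ 0 := by rintro h0; simp [h0] at hodd
  have hne : (x j).natAbs ≠ (x o).natAbs := fun heq => Nat.not_even_iff_odd.mpr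
    (Int.natAbs_odd.mpr hodd) (heq ▸ Int.natAbs_even.mpr (heven j h.symm))
  rcases hne.lt_or_gt with hlt | hgt
  · obtain ⟨s, hs⟩ := Int.exists_natAbs_add_two_mul_mul_le (x o) hxj
    refine ⟨update x o (x o + 2 * s * x j), orbit_update_pivot h s x, ?_, fun k hk => ?_,
      sum_natAbs_update_lt (hs.trans_lt hlt)⟩
    · simpa using hodd.add_even ((even_two_mul s).mul_right (x j))
    · simpa [hk] using heven k hk
  · obtain ⟨s, hs⟩ := Int.exists_natAbs_add_two_mul_mul_le (x j) hxo
    refine ⟨update x j (x j + 2 * s * x o), orbit_update_off_pivot h s x, ?_, fun k hk => ?_,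
      sum_natAbs_update_lt (hs.trans_lt hgt)⟩
    · simpa [h] using hodd
    · rcases eq_or_ne k j with rfl | hkj
      · simpa using (heven k hk).add ((even_two_mul s).mul_right (x o))
      · simpa [hkj] using heven k hk

lemma exists_orbit_eq_orbit_single_of_odd_pivot {x : Fin p → ℤ} (hodd : Odd (x o))
    (heven : ∀ k ≠ o, Even (x k)) :
    ∃ g : ℤ, orbit (pivotSubgroup o) x = orbit (pivotSubgroup o) (Pi.single o g : Fin p → ℤ) := by
  induction hM : ∑ k, (x k).natAbs using Nat.strong_induction_on generalizing x with
  | _ M ih =>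
  by_cases hx : ∃ j ≠ o, x j ≠ 0
  · obtain ⟨j, hjo, hxj⟩ := hx
    obtain ⟨y, hyx, hyo, hye, hlt⟩ := exists_orbit_eq_sum_natAbs_lt hjo.symm hodd heven hxj
    obtain ⟨g, hg⟩ := ih _ (hM ▸ hlt) hyo hye rfl
    exact ⟨g, hyx ▸ hg⟩
  · refine ⟨x o, congrArg _ (funext fun k => ?_)⟩
    rcases eq_or_ne k o with rfl | hko
    · simp
    · have hxk : x k = 0 := by_contra fun hxk => hx ⟨k, hko, hxk⟩
      simp [hko, hxk]

lemma exists_orbit_eq_orbit_single_of_odd {x : Fin p → ℤ} {k₀ : Fin p} (hodd : Odd (x k₀))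
    (heven : ∀ k ≠ k₀, Even (x k)) :
    ∃ g : ℤ, orbit (pivotSubgroup o) x = orbit (pivotSubgroup o) (Pi.single o g : Fin p → ℤ) := by
  rcases eq_or_ne o k₀ with rfl | h
  · exact exists_orbit_eq_orbit_single_of_odd_pivot hodd heven
  rw [← Subgroup.orbit_smul_of_mem (Qm_mem_pivotSubgroup h)]
  refine exists_orbit_eq_orbit_single_of_odd_pivot (by simpa [Qm_smul, h] using hodd.neg)
    fun k hk => ?_
  rcases eq_or_ne k k₀ with rfl | hkk
  · simpa [Qm_smul, hk] using heven o h
  · simpa [Qm_smul, hk, hkk] using heven k hkk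

lemma orbit_eq_orbit_single_one [Nontrivial (Fin p)] {x c : Fin p → ℤ} (hxc : x ⬝ᵥ c = 1)
    {g : ℤ} (hg : orbit (pivotSubgroup o) x = orbit (pivotSubgroup o) (Pi.single o g : Fin p → ℤ)) :
    orbit (pivotSubgroup o) x = orbit (pivotSubgroup o) (Pi.single o 1 : Fin p → ℤ) := by
  obtain ⟨K, hK⟩ := orbit_eq_iff.mp hg
  have hx : x = g • (K • (Pi.single o 1 : Fin p → ℤ)) := by
    rw [← hK, smul_comm, ← Pi.single_smul', smul_eq_mul, mul_one]
  rw [hx, smul_dotProduct, smul_eq_mul] at hxc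
  rcases Int.eq_one_or_neg_one_of_mul_eq_one hxc with rfl | rfl
  · exact hg
  · rw [hg, orbit_single_neg_one]

end pivotSubgroup

lemma exists_mem_orbit_single_dotProduct_eq_one [Nontrivial (Fin p)] (o : Fin p)
    {v c : Fin p → ℤ} (hvc : v ⬝ᵥ c = 1) :
    ∃ w ∈ orbit (pivotSubgroup o) (Pi.single o 1 : Fin p → ℤ), v ⬝ᵥ w = 1 := by
  obtain ⟨k₀, hk₀⟩ := exists_odd_of_dotProduct_eq_one hvc
  have hsq : Even (1 - v k₀ ^ 2) := odd_one.sub_odd hk₀.pow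
  set w := v k₀ • Pi.single k₀ 1 + (1 - v k₀ ^ 2) • c
  have hvw : v ⬝ᵥ w = 1 := by
    simp only [w, dotProduct_add, dotProduct_smul, hvc, dotProduct_single, smul_eq_mul]
    ring
  obtain ⟨g, hg⟩ := exists_orbit_eq_orbit_single_of_odd (o := o) (x := w) (k₀ := k₀)
    (by simpa [w] using hk₀.add_even (hsq.mul_right (c k₀)))
    (fun k hk => by simpa [w, hk] using hsq.mul_right (c k))
  exact ⟨w, orbit_eq_iff.mp (orbit_eq_orbit_single_one (by rwa [dotProduct_comm]) hg), hvw⟩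

/-- For any index `i` and any `U ∈ SL(p,ℤ)`, `U` can be written as `U = K * J` where `K`
is a word in the `R_{1j}²`, `Q_{1j}` (`1 < j ≤ p`), and the `(i,i)` entry of `J⁻¹`
equals `1` (equivalently, the `(i,i)` cofactor of `J` equals `1`). -/
theorem statement5 (p : ℕ) (hp : 2 ≤ p) (i : Fin p) (U : Matrix.SpecialLinearGroup (Fin p) ℤ) :
    ∃ K J : Matrix.SpecialLinearGroup (Fin p) ℤ,
      K ∈ Subgroup.closure
        {A | ∃ (j : Fin p) (h : firstIdx p hp ≠ j),
          A = Rm p (firstIdx p hp) j h ^ 2 ∨ A = Qm p (firstIdx p hp) j h} ∧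
      ((J⁻¹ : Matrix.SpecialLinearGroup (Fin p) ℤ) : Matrix (Fin p) (Fin p) ℤ) i i = 1 ∧
      U = K * J := by
  have : Nontrivial (Fin p) := Fin.nontrivial_iff_two_le.mpr hp
  have hU : ((U⁻¹ : Matrix.SpecialLinearGroup (Fin p) ℤ) : Matrix (Fin p) (Fin p) ℤ) i ⬝ᵥ
      (fun k => (U : Matrix (Fin p) (Fin p) ℤ) k i) = 1 := by
    rw [← mul_apply', ← Matrix.SpecialLinearGroup.coe_mul, inv_mul_cancel,
      Matrix.SpecialLinearGroup.coe_one, one_apply_eq]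
  obtain ⟨w, hw, hUw⟩ := exists_mem_orbit_single_dotProduct_eq_one (firstIdx p hp) hU
  rw [← orbit_single_eq_orbit_single _ i] at hw
  obtain ⟨⟨K, hK⟩, rfl⟩ := hw
  refine ⟨K, K⁻¹ * U, hK, ?_, by group⟩
  rw [_root_.mul_inv_rev, inv_inv, Matrix.SpecialLinearGroup.coe_mul, mul_apply']
  refine Eq.trans ?_ hUw
  congr 1
  ext k
  simp [Matrix.SpecialLinearGroup.smul_def]
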